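/- arXiv:2404.17085 — 2 statements merged into one kernel-verified Lean document; each statement's English description precedes it below -/
import Mathlib

section
/- Let H be the n×n weighted incidence matrix of a weighted complex unit gain cycle C_n with oriented edges e_1,...,e_n, where edge e_i goes from v_i to v_{i+1} (mod n). Then det(H) = (∏_{i=1}^n √(w(e_i))) · (1 − φ(C_n)^{-1}), where φ(C_n) is the product of the edge gains around the cycle. -/
open Matrix Complex BigOperators

/-- Laplacian of a weighted complex unit gain cycle on `n` vertices (`n ≥ 3`, enforced via
`[NeZero n]` plus a `3 ≤ n` hypothesis in the theorems), where the oriented edge `i` goes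
from vertex `i` to vertex `i+1` (indices mod `n`), carries gain `φ i` and weight `w i`. -/
noncomputable def cycleLap (n : ℕ) [NeZero n] (φ : Fin n → ℂ) (w : Fin n → ℝ) :
    Matrix (Fin n) (Fin n) ℂ := fun i j =>
  if i = j then ((w (i - 1) + w i : ℝ) : ℂ)
  else if j = i + 1 then -(φ i * (w i : ℂ))
  else if i = j + 1 then -((φ j)⁻¹ * (w j : ℂ))
  else 0

/-- Weighted incidence matrix of a weighted complex unit gain cycle on `n` vertices:
rows indexed by vertices, columns by the oriented edges `e : Fin n` (edge `e` goes from
vertex `e` to vertex `e+1`). -/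
noncomputable def cycleInc (n : ℕ) [NeZero n] (φ : Fin n → ℂ) (w : Fin n → ℝ) :
    Matrix (Fin n) (Fin n) ℂ := fun v e =>
  if v = e then (Real.sqrt (w e) : ℂ)
  else if v = e + 1 then -(φ e)⁻¹ * (Real.sqrt (w e) : ℂ)
  else 0

/-! A term `sign σ • ∏ e, H (σ e) e` of the Leibniz expansion of the determinant vanishes unless
every edge `e` is sent by `σ` to one of its endpoints `e`, `e + 1`. Such a permutation is either
the identity, contributing `∏ √w`, or the rotation `e ↦ e + 1`, contributing
`(-1) ^ (n - 1) ∏ (-φ⁻¹ √w) = -(∏ √w) (∏ φ)⁻¹`. -/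

open Fin.NatCast in
theorem Fin.perm_eq_one_or_eq_finRotate {n : ℕ} [NeZero n] (σ : Equiv.Perm (Fin n))
    (hσ : ∀ i, σ i = i ∨ σ i = i + 1) : σ = 1 ∨ σ = finRotate n := by
  by_cases hfix : ∀ i, σ i = i
  · exact .inl (Equiv.ext hfix)
  obtain ⟨b, hb⟩ := not_forall.mp hfix
  -- `σ i = i + 1 = σ (i + 1)` would force `i + 1 = i`
  have hstep : ∀ i, σ i ≠ i → σ (i + 1) ≠ i + 1 := fun i hi h => by
    have hsucc := (hσ i).resolve_left hi
    exact hi (hsucc.trans (σ.injective (hsucc.trans h.symm)).symm)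
  have hmoved : ∀ k : ℕ, σ (b + k) ≠ b + k := by
    intro k
    induction k with
    | zero => simpa using hb
    | succ k ih => simpa [add_assoc] using hstep _ ih
  refine .inr (Equiv.ext fun i => ?_)
  have hi : σ i ≠ i := by simpa using hmoved (i - b).val
  rw [(hσ i).resolve_left hi, finRotate_apply]

theorem Matrix.det_of_cycleBidiagonal {R : Type*} [CommRing R] {n : ℕ} [NeZero n] (hn : 2 ≤ n)
    (a b : Fin n → R) :
    det (of fun i j : Fin n => if i = j then a j else if i = j + 1 then b j else 0) =
      ∏ j, a j - (-1) ^ n * ∏ j, b j := by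
  have hsucc_ne : ∀ j : Fin n, j + 1 ≠ j := fun j h => by
    have : (1 : Fin n) = 0 := by simpa using congrArg (· - j) h
    exact absurd (Fin.one_eq_zero_iff.mp this) (by omega)
  have hrot_ne : (1 : Equiv.Perm (Fin n)) ≠ finRotate n := fun h =>
    hsucc_ne 0 (by rw [← finRotate_apply, ← h]; rfl)
  rw [det_apply, Fintype.sum_eq_add 1 (finRotate n) hrot_ne]
  · have hsign : (-1 : R) ^ (n - 1) = -(-1) ^ n := by
      obtain ⟨m, rfl⟩ : ∃ m, n = m + 1 := ⟨n - 1, by omega⟩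
      simp [pow_succ]
    simp only [Equiv.Perm.sign_one, Equiv.Perm.one_apply, one_smul, sign_finRotate,
      finRotate_apply, Units.smul_def, of_apply, if_pos, hsucc_ne, if_false,
      Units.val_pow_eq_pow_val, Units.val_neg, Units.val_one, zsmul_eq_mul, Int.cast_pow, Int.cast_neg, Int.cast_one, hsign]
    ring
  · rintro σ ⟨hσ_one, hσ_rot⟩
    obtain ⟨j, hj⟩ : ∃ j, ¬(σ j = j ∨ σ j = j + 1) := by
      by_contra! h
      exact (Fin.perm_eq_one_or_eq_finRotate σ h).elim hσ_one hσ_rot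
    rw [Finset.prod_eq_zero (Finset.mem_univ j) (by simp [not_or.mp hj]), smul_zero]

theorem det_cycleInc_general {n : ℕ} [NeZero n] (hn : 3 ≤ n) (φ : Fin n → ℂ) (w : Fin n → ℝ) :
    (cycleInc n φ w).det =
      (∏ i, (Real.sqrt (w i) : ℂ)) * (1 - (∏ i, φ i)⁻¹) := by
  have hinc : cycleInc n φ w = of fun v e => if v = e then (Real.sqrt (w e) : ℂ)
      else if v = e + 1 then -(φ e)⁻¹ * (Real.sqrt (w e) : ℂ) else 0 := rfl
  rw [hinc, det_of_cycleBidiagonal (by omega), Finset.prod_mul_distrib, Finset.prod_neg,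
    Finset.prod_inv_distrib, Finset.card_univ, Fintype.card_fin]
  have hsq : ((-1 : ℂ) ^ n) ^ 2 = 1 := by rw [← pow_mul, mul_comm, pow_mul]; simp
  linear_combination (-(∏ i, φ i)⁻¹ * ∏ i, (Real.sqrt (w i) : ℂ)) * hsq

/-- The determinant of the weighted incidence matrix of a weighted complex
unit gain cycle `C_n` equals `(∏ √(w(e_i))) · (1 - φ(C_n)⁻¹)`. -/
theorem det_cycleInc {n : ℕ} [NeZero n] (hn : 3 ≤ n) (φ : Fin n → ℂ) (w : Fin n → ℝ)
    (hφ : ∀ i, ‖φ i‖ = 1) (hw : ∀ i, 0 < w i) :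
    (cycleInc n φ w).det =
      (∏ i, (Real.sqrt (w i) : ℂ)) * (1 - (∏ i, φ i)⁻¹) :=
  det_cycleInc_general hn φ w
end

section
/- Let Θ = (Σ,φ) be a connected balanced complex unit gain graph. Then D^max(Θ) = D^min(Θ) =: D(Θ) and the gain distance Laplacian DL(Θ) = Tr(Σ) − D(Θ) is similar (via a diagonal unitary matrix) to the distance Laplacian DL(Σ) of the underlying graph; hence DL(Θ) and DL(Σ) are cospectral. -/
open Matrix Complex BigOperators

/-- The gain of a walk in a complex unit gain graph: the product of the gains of its
edges in order. -/
def walkGain {n : ℕ} {G : SimpleGraph (Fin n)} (φ : Fin n → Fin n → ℂ) :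
    {u v : Fin n} → G.Walk u v → ℂ
  | _, _, SimpleGraph.Walk.nil => 1
  | u, _, SimpleGraph.Walk.cons (v := x) _ p => φ u x * walkGain φ p

/-- A complex unit gain graph is balanced if every cycle has gain 1. -/
def IsBalanced {n : ℕ} (G : SimpleGraph (Fin n)) (φ : Fin n → Fin n → ℂ) : Prop :=
  ∀ (u : Fin n) (c : G.Walk u u), c.IsCycle → walkGain φ c = 1

/-- The lexicographically maximal gain (first maximizing the real part, then the
imaginary part) among the gains of all shortest paths from `u` to `v`. -/
noncomputable def phiMaxAux {n : ℕ} (G : SimpleGraph (Fin n)) (φ : Fin n → Fin n → ℂ)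
    (u v : Fin n) : ℂ :=
  let S : Set ℂ := {z | ∃ p : G.Walk u v, p.length = G.dist u v ∧ z = walkGain φ p}
  { re := sSup (Complex.re '' S),
    im := sSup (Complex.im '' {z ∈ S | z.re = sSup (Complex.re '' S)}) }

/-- The lexicographically minimal gain among the gains of all shortest paths. -/
noncomputable def phiMinAux {n : ℕ} (G : SimpleGraph (Fin n)) (φ : Fin n → Fin n → ℂ)
    (u v : Fin n) : ℂ :=
  let S : Set ℂ := {z | ∃ p : G.Walk u v, p.length = G.dist u v ∧ z = walkGain φ p}
  { re := sInf (Complex.re '' S),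
    im := sInf (Complex.im '' {z ∈ S | z.re = sInf (Complex.re '' S)}) }

/-- Maximum auxiliary gain `φ^max_<` for the standard ordering of `Fin n`. -/
noncomputable def phiMax {n : ℕ} (G : SimpleGraph (Fin n)) (φ : Fin n → Fin n → ℂ)
    (u v : Fin n) : ℂ :=
  if u = v then 0
  else if u < v then phiMaxAux G φ u v
  else (starRingEnd ℂ) (phiMaxAux G φ v u)

/-- Minimum auxiliary gain `φ^min_<` for the standard ordering of `Fin n`. -/
noncomputable def phiMin {n : ℕ} (G : SimpleGraph (Fin n)) (φ : Fin n → Fin n → ℂ)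
    (u v : Fin n) : ℂ :=
  if u = v then 0
  else if u < v then phiMinAux G φ u v
  else (starRingEnd ℂ) (phiMinAux G φ v u)

/-- The maximum gain distance matrix `D^max_<`. -/
noncomputable def Dmax {n : ℕ} (G : SimpleGraph (Fin n)) (φ : Fin n → Fin n → ℂ) :
    Matrix (Fin n) (Fin n) ℂ :=
  fun s t => phiMax G φ s t * (G.dist s t : ℂ)

/-- The minimum gain distance matrix `D^min_<`. -/
noncomputable def Dmin {n : ℕ} (G : SimpleGraph (Fin n)) (φ : Fin n → Fin n → ℂ) :
    Matrix (Fin n) (Fin n) ℂ :=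
  fun s t => phiMin G φ s t * (G.dist s t : ℂ)

/-- The diagonal transmission matrix `Tr(Σ)`, with `tr(v) = Σ_u d(v,u)`. -/
noncomputable def TrM {n : ℕ} (G : SimpleGraph (Fin n)) : Matrix (Fin n) (Fin n) ℂ :=
  Matrix.diagonal (fun v => ((∑ u, G.dist v u : ℕ) : ℂ))

/-- The maximum gain distance Laplacian `DL^max_< = Tr(Σ) − D^max_<`. -/
noncomputable def DLmax {n : ℕ} (G : SimpleGraph (Fin n)) (φ : Fin n → Fin n → ℂ) :
    Matrix (Fin n) (Fin n) ℂ := TrM G - Dmax G φ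

/-- The minimum gain distance Laplacian `DL^min_< = Tr(Σ) − D^min_<`. -/
noncomputable def DLmin {n : ℕ} (G : SimpleGraph (Fin n)) (φ : Fin n → Fin n → ℂ) :
    Matrix (Fin n) (Fin n) ℂ := TrM G - Dmin G φ

/-- The maximum distance incidence matrix `DH^max_<`: rows indexed by vertices, columns by
pairs `j < k` (oriented from `j` to `k`). -/
noncomputable def DHmax {n : ℕ} (G : SimpleGraph (Fin n)) (φ : Fin n → Fin n → ℂ) :
    Matrix (Fin n) {p : Fin n × Fin n // p.1 < p.2} ℂ := fun v e =>
  if v = e.1.1 then (Real.sqrt (G.dist e.1.1 e.1.2) : ℂ)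
  else if v = e.1.2 then -(phiMax G φ e.1.1 e.1.2)⁻¹ * (Real.sqrt (G.dist e.1.1 e.1.2) : ℂ)
  else 0

/-- The distance Laplacian of the underlying graph: DL(Σ) = Tr(Σ) − D(Σ). -/
noncomputable def DLunderlying {n : ℕ} (G : SimpleGraph (Fin n)) :
    Matrix (Fin n) (Fin n) ℂ := TrM G - Matrix.of (fun s t => (G.dist s t : ℂ))

section Aux

open SimpleGraph

variable {n : ℕ} {G : SimpleGraph (Fin n)} {φ : Fin n → Fin n → ℂ}

lemma walkGain_append {u v w : Fin n} (p : G.Walk u v) (q : G.Walk v w) :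
    walkGain φ (p.append q) = walkGain φ p * walkGain φ q := by
  induction p with
  | nil => simp [walkGain]
  | cons h p ih => simp [walkGain, ih, mul_assoc]

lemma walkGain_abs (hφ1 : ∀ i j, G.Adj i j → ‖φ i j‖ = 1)
    {u v : Fin n} (p : G.Walk u v) : ‖walkGain φ p‖ = 1 := by
  induction p with
  | nil => simp [walkGain]
  | cons h p ih => simp [walkGain, norm_mul, hφ1 _ _ h, ih]

lemma walkGain_ne_zero (hφ1 : ∀ i j, G.Adj i j → ‖φ i j‖ = 1)
    {u v : Fin n} (p : G.Walk u v) : walkGain φ p ≠ 0 := by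
  intro h
  have := walkGain_abs hφ1 p
  rw [h] at this
  simp at this

lemma walkGain_reverse (hφ2 : ∀ i j, G.Adj i j → φ j i = (φ i j)⁻¹)
    {u v : Fin n} (p : G.Walk u v) :
    walkGain φ p.reverse = (walkGain φ p)⁻¹ := by
  induction p with
  | nil => simp [walkGain]
  | cons h p ih =>
    rw [SimpleGraph.Walk.reverse_cons, walkGain_append, ih]
    show _ * (φ _ _ * walkGain φ SimpleGraph.Walk.nil) = _
    rw [hφ2 _ _ h]
    show _ * ((φ _ _)⁻¹ * 1) = (φ _ _ * walkGain φ p)⁻¹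
    rw [mul_inv, mul_one, mul_comm]

lemma walkGain_rotate {u x : Fin n} (c : G.Walk u u) (hx : x ∈ c.support) :
    walkGain φ (c.rotate x hx) = walkGain φ c := by
  rw [SimpleGraph.Walk.rotate, walkGain_append, mul_comm, ← walkGain_append,
    SimpleGraph.Walk.take_spec]

lemma walk_length_rotate {u x : Fin n} (c : G.Walk u u) (hx : x ∈ c.support) :
    (c.rotate x hx).length = c.length := by
  have h := congrArg SimpleGraph.Walk.length (c.take_spec hx)
  rw [SimpleGraph.Walk.length_append] at h
  rw [SimpleGraph.Walk.rotate, SimpleGraph.Walk.length_append]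
  omega

lemma isPath_edge_end {v u : Fin n} (p : G.Walk v u) (hp : p.IsPath)
    (he : s(u, v) ∈ p.edges) :
    ∃ h' : G.Adj v u, p = SimpleGraph.Walk.cons h' SimpleGraph.Walk.nil := by
  induction p with
  | nil => simp at he
  | @cons v w u h q ih =>
    rw [SimpleGraph.Walk.edges_cons, List.mem_cons] at he
    rcases he with heq | hmem
    · rw [Sym2.eq_iff] at heq
      rcases heq with ⟨h1, h2⟩ | ⟨h1, _⟩
      · exact absurd (h2 ▸ h) (G.loopless.irrefl v)
      · subst h1
        have hq : q.IsPath := ((SimpleGraph.Walk.cons_isPath_iff h q).mp hp).1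
        have : q = SimpleGraph.Walk.nil := SimpleGraph.Walk.isPath_iff_eq_nil.mp hq
        exact ⟨h, by rw [this]⟩
    · have hv : v ∈ q.support := SimpleGraph.Walk.snd_mem_support_of_mem_edges q hmem
      have := ((SimpleGraph.Walk.cons_isPath_iff h q).mp hp).2
      exact absurd hv this

lemma walkGain_closed_aux (hφ1 : ∀ i j, G.Adj i j → ‖φ i j‖ = 1)
    (hφ2 : ∀ i j, G.Adj i j → φ j i = (φ i j)⁻¹) (hbal : IsBalanced G φ) :
    ∀ (m : ℕ) (u : Fin n) (c : G.Walk u u), c.length ≤ m → walkGain φ c = 1 := by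
  intro m
  induction m using Nat.strong_induction_on with
  | _ m ih =>
  intro u c hlen
  by_cases hnd : c.support.tail.Nodup
  · cases c with
    | nil => rfl
    | @cons _ v _ h p =>
      have hp : p.IsPath := by
        rw [SimpleGraph.Walk.isPath_def]
        simpa using hnd
      by_cases he : s(u, v) ∈ p.edges
      · obtain ⟨h', rfl⟩ := isPath_edge_end p hp he
        show φ u v * (φ v u * 1) = 1
        rw [hφ2 _ _ h, mul_one, mul_inv_cancel₀]
        intro h0
        have := hφ1 _ _ h
        rw [h0] at this
        simp at this
      · exact hbal u _ ((SimpleGraph.Walk.cons_isCycle_iff p h).mpr ⟨hp, he⟩)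
  · obtain ⟨x, hdup⟩ := List.exists_duplicate_iff_not_nodup.mpr hnd
    have hcnt : 2 ≤ c.support.tail.count x := List.duplicate_iff_two_le_count.mp hdup
    have hx : x ∈ c.support := List.mem_of_mem_tail hdup.mem
    have hcnt' : 2 ≤ (c.rotate x hx).support.tail.count x := by
      rw [((SimpleGraph.Walk.support_rotate c x hx).perm).count_eq]
      exact hcnt
    have hglen : (c.rotate x hx).length = c.length := walk_length_rotate c hx
    have hgain : walkGain φ (c.rotate x hx) = walkGain φ c := walkGain_rotate c hx
    rw [← hgain]
    generalize hc' : c.rotate x hx = c' at *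
    cases c' with
    | nil => simp at hcnt'
    | @cons _ y _ h r =>
      have hcr : 2 ≤ r.support.count x := by simpa using hcnt'
      have hxr : x ∈ r.support := by
        rw [← List.count_pos_iff]
        omega
      set t := r.takeUntil x hxr with ht
      set d := r.dropUntil x hxr with hd
      have hspec : t.append d = r := r.take_spec hxr
      have hct : t.support.count x = 1 := r.count_support_takeUntil_eq_one hxr
      have hcd : 1 ≤ d.support.tail.count x := by
        have := congrArg (fun l => List.count x l) (congrArg SimpleGraph.Walk.support hspec)
        simp only [SimpleGraph.Walk.support_append, List.count_append] at this
        omega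
      have hdne : d.length ≠ 0 := by
        intro h0
        have : d.support.tail = [] := by
          have := d.length_support
          cases hs : d.support with
          | nil => exact absurd hs d.support_ne_nil
          | cons a l =>
            rw [hs] at this
            simp only [List.length_cons] at this
            have : l.length = 0 := by omega
            simpa using List.eq_nil_of_length_eq_zero this
        rw [this] at hcd
        simp at hcd
      have hlr : 1 + r.length ≤ m := by
        rw [SimpleGraph.Walk.length_cons] at hglen
        omega
      have hlen_split : t.length + d.length = r.length := by
        have := congrArg SimpleGraph.Walk.length hspec
        rwa [SimpleGraph.Walk.length_append] at this
      have h1 : walkGain φ (SimpleGraph.Walk.cons h t) = 1 := by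
        refine ih (1 + t.length) (by omega) x (SimpleGraph.Walk.cons h t) ?_
        simp [SimpleGraph.Walk.length_cons]
      have h2 : walkGain φ d = 1 := by
        refine ih d.length (by omega) x d ?_
        omega
      have : walkGain φ (SimpleGraph.Walk.cons h r) =
          walkGain φ (SimpleGraph.Walk.cons h t) * walkGain φ d := by
        show φ _ _ * walkGain φ r = (φ _ _ * walkGain φ t) * walkGain φ d
        rw [← hspec, walkGain_append, mul_assoc]
      rw [this, h1, h2, mul_one]

lemma walkGain_closed (hφ1 : ∀ i j, G.Adj i j → ‖φ i j‖ = 1)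
    (hφ2 : ∀ i j, G.Adj i j → φ j i = (φ i j)⁻¹) (hbal : IsBalanced G φ)
    {u : Fin n} (c : G.Walk u u) : walkGain φ c = 1 :=
  walkGain_closed_aux hφ1 hφ2 hbal c.length u c le_rfl

lemma walkGain_eq_of_walks (hφ1 : ∀ i j, G.Adj i j → ‖φ i j‖ = 1)
    (hφ2 : ∀ i j, G.Adj i j → φ j i = (φ i j)⁻¹) (hbal : IsBalanced G φ)
    {u v : Fin n} (p q : G.Walk u v) : walkGain φ p = walkGain φ q := by
  have h1 : walkGain φ (p.append q.reverse) = 1 := walkGain_closed hφ1 hφ2 hbal _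
  rw [walkGain_append, walkGain_reverse hφ2] at h1
  have hq : walkGain φ q ≠ 0 := walkGain_ne_zero hφ1 q
  field_simp at h1
  exact h1

lemma charpoly_conj_aux {N : ℕ} (P P' B : Matrix (Fin N) (Fin N) ℂ)
    (h1 : P * P' = 1) : (P * B * P').charpoly = B.charpoly := by
  classical
  unfold Matrix.charpoly
  have hmap : ∀ (A A' : Matrix (Fin N) (Fin N) ℂ),
      (A * A').map (Polynomial.C : ℂ →+* Polynomial ℂ) =
        A.map Polynomial.C * A'.map Polynomial.C := fun A A' =>
    Matrix.map_mul
  have hscal : Matrix.charmatrix (P * B * P') =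
      P.map Polynomial.C * Matrix.charmatrix B * P'.map Polynomial.C := by
    unfold Matrix.charmatrix
    rw [Matrix.mul_sub, Matrix.sub_mul]
    congr 1
    · have hcomm : Matrix.scalar (Fin N) (Polynomial.X : Polynomial ℂ) *
          P'.map Polynomial.C = P'.map Polynomial.C *
            Matrix.scalar (Fin N) (Polynomial.X : Polynomial ℂ) :=
        (Matrix.scalar_commute _ (fun r' => Commute.all _ r') _).eq
      calc Matrix.scalar (Fin N) (Polynomial.X : Polynomial ℂ)
          = Matrix.scalar (Fin N) (Polynomial.X : Polynomial ℂ) *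
              ((P * P').map Polynomial.C) := by rw [h1, Matrix.map_one _ (map_zero _) (map_one _), mul_one]
        _ = Matrix.scalar (Fin N) (Polynomial.X : Polynomial ℂ) *
              (P.map Polynomial.C * P'.map Polynomial.C) := by rw [hmap]
        _ = P.map Polynomial.C * Matrix.scalar (Fin N) (Polynomial.X : Polynomial ℂ) *
              P'.map Polynomial.C := by
            rw [← mul_assoc,
              (Matrix.scalar_commute _ (fun r' => Commute.all _ r')
                (P.map Polynomial.C)).eq]
    · simp only [RingHom.mapMatrix_apply]
      rw [hmap, hmap]
  rw [hscal, Matrix.det_mul, Matrix.det_mul]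
  have hdet : (P.map Polynomial.C).det * (P'.map Polynomial.C).det = 1 := by
    rw [← Matrix.det_mul, ← hmap, h1, Matrix.map_one _ (map_zero _) (map_one _), Matrix.det_one]
  calc (P.map Polynomial.C).det * (Matrix.charmatrix B).det * (P'.map Polynomial.C).det
      = (Matrix.charmatrix B).det * ((P.map Polynomial.C).det * (P'.map Polynomial.C).det) := by
        ring
    _ = (Matrix.charmatrix B).det := by rw [hdet, mul_one]

lemma phiAux_of_singleton {u v : Fin n} (w : ℂ)
    (hS : {z : ℂ | ∃ p : G.Walk u v, p.length = G.dist u v ∧ z = walkGain φ p} = {w}) :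
    phiMaxAux G φ u v = w ∧ phiMinAux G φ u v = w := by
  have h3 : {z ∈ ({w} : Set ℂ) | z.re = w.re} = {w} := by
    ext z
    simp only [Set.mem_sep_iff, Set.mem_singleton_iff]
    exact ⟨fun h => h.1, fun h => ⟨h, by rw [h]⟩⟩
  constructor <;>
  · simp only [phiMaxAux, phiMinAux, hS, Set.image_singleton, csSup_singleton,
      csInf_singleton, h3]

end Aux

/-- For a connected balanced complex unit gain graph, D^max = D^min, and the
gain distance Laplacian DL(Θ) is similar via a diagonal unitary matrix to the distance
Laplacian DL(Σ) of the underlying graph; hence they are cospectral. -/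
theorem balanced_gain_distance_laplacian_cospectral {n : ℕ}
    (G : SimpleGraph (Fin n)) (φ : Fin n → Fin n → ℂ)
    (hconn : G.Connected)
    (hφ1 : ∀ i j, G.Adj i j → ‖φ i j‖ = 1)
    (hφ2 : ∀ i j, G.Adj i j → φ j i = (φ i j)⁻¹)
    (hbal : IsBalanced G φ) :
    Dmax G φ = Dmin G φ ∧
    (∃ ξ : Fin n → ℂ, (∀ v, ‖ξ v‖ = 1) ∧
      DLmax G φ = Matrix.diagonal ξ * DLunderlying G * (Matrix.diagonal ξ)⁻¹) ∧
    (DLmax G φ).charpoly = (DLunderlying G).charpoly := by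
  classical
  obtain ⟨r⟩ := hconn.nonempty
  set ξ : Fin n → ℂ := fun v => walkGain φ (hconn.preconnected r v).some with hξdef
  have hξ0 : ∀ v, ξ v ≠ 0 := fun v => walkGain_ne_zero hφ1 _
  have habs : ∀ v, ‖ξ v‖ = 1 := fun v => walkGain_abs hφ1 _
  have key : ∀ (u v : Fin n) (p : G.Walk u v), walkGain φ p = (ξ u)⁻¹ * ξ v := by
    intro u v p
    have h := walkGain_eq_of_walks hφ1 hφ2 hbal
      (((hconn.preconnected r u).some).append p) ((hconn.preconnected r v).some)
    rw [walkGain_append] at h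
    have h2 : ξ u * walkGain φ p = ξ v := h
    rw [← h2, ← mul_assoc, inv_mul_cancel₀ (hξ0 u), one_mul]
  have hconj : ∀ v, (starRingEnd ℂ) (ξ v) = (ξ v)⁻¹ := by
    intro v
    have h : ξ v * (starRingEnd ℂ) (ξ v) = 1 := by
      rw [Complex.mul_conj]
      rw [Complex.normSq_eq_norm_sq, habs v]
      norm_num
    exact eq_inv_of_mul_eq_one_right h
  have haux : ∀ u v : Fin n,
      phiMaxAux G φ u v = (ξ u)⁻¹ * ξ v ∧ phiMinAux G φ u v = (ξ u)⁻¹ * ξ v := by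
    intro u v
    apply phiAux_of_singleton
    ext z
    simp only [Set.mem_setOf_eq, Set.mem_singleton_iff]
    constructor
    · rintro ⟨p, -, rfl⟩
      exact key u v p
    · rintro rfl
      obtain ⟨p, hp⟩ := hconn.exists_walk_length_eq_dist u v
      exact ⟨p, hp, (key u v p).symm⟩
  have hmax : ∀ u v : Fin n,
      phiMax G φ u v = if u = v then 0 else (ξ u)⁻¹ * ξ v := by
    intro u v
    unfold phiMax
    by_cases huv : u = v
    · simp [huv]
    · simp only [huv, if_false]
      by_cases hlt : u < v
      · simp only [hlt, if_true, (haux u v).1]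
      · simp only [hlt, if_false, (haux v u).1]
        rw [_root_.map_mul, map_inv₀, hconj, hconj, inv_inv, mul_comm]
  have hmin : ∀ u v : Fin n,
      phiMin G φ u v = if u = v then 0 else (ξ u)⁻¹ * ξ v := by
    intro u v
    unfold phiMin
    by_cases huv : u = v
    · simp [huv]
    · simp only [huv, if_false]
      by_cases hlt : u < v
      · simp only [hlt, if_true, (haux u v).2]
      · simp only [hlt, if_false, (haux v u).2]
        rw [_root_.map_mul, map_inv₀, hconj, hconj, inv_inv, mul_comm]
  -- Part 1 : Dmax = Dmin
  have hDD : Dmax G φ = Dmin G φ := by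
    unfold Dmax Dmin
    funext s t
    rw [hmax, hmin]
  refine ⟨hDD, ?_, ?_⟩
  -- the diagonal unitary similarity
  · set ζ : Fin n → ℂ := fun v => (ξ v)⁻¹ with hζdef
    have hζ1 : Matrix.diagonal ζ * Matrix.diagonal ξ = 1 := by
      rw [Matrix.diagonal_mul_diagonal]
      have : (fun v => ζ v * ξ v) = fun _ => (1 : ℂ) :=
        funext fun v => inv_mul_cancel₀ (hξ0 v)
      rw [this, Matrix.diagonal_one]
    have hinv : (Matrix.diagonal ζ)⁻¹ = Matrix.diagonal ξ :=
      Matrix.inv_eq_right_inv hζ1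
    refine ⟨ζ, fun v => by simp [hζdef, habs v], ?_⟩
    rw [hinv]
    ext i j
    rw [Matrix.mul_diagonal, Matrix.diagonal_mul]
    show (TrM G i j - Dmax G φ i j) = ζ i * ((TrM G i j - (G.dist i j : ℂ))) * ξ j
    by_cases hij : i = j
    · subst hij
      show TrM G i i - phiMax G φ i i * (G.dist i i : ℂ) = _
      rw [hmax, SimpleGraph.dist_self]
      simp only [if_pos rfl]
      push_cast
      have hz : ζ i = (ξ i)⁻¹ := rfl
      rw [hz, zero_mul, sub_zero, mul_comm ((ξ i)⁻¹) (TrM G i i), mul_assoc, inv_mul_cancel₀ (hξ0 i), mul_one]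
    · show TrM G i j - phiMax G φ i j * (G.dist i j : ℂ) = _
      rw [hmax]
      simp only [hij, if_false]
      unfold TrM
      rw [Matrix.diagonal_apply_ne _ hij]
      rw [hζdef]
      ring
  -- cospectrality
  · set ζ : Fin n → ℂ := fun v => (ξ v)⁻¹ with hζdef
    have hζ1 : Matrix.diagonal ζ * Matrix.diagonal ξ = 1 := by
      rw [Matrix.diagonal_mul_diagonal]
      have : (fun v => ζ v * ξ v) = fun _ => (1 : ℂ) :=
        funext fun v => inv_mul_cancel₀ (hξ0 v)
      rw [this, Matrix.diagonal_one]
    have hsim : DLmax G φ = Matrix.diagonal ζ * DLunderlying G * Matrix.diagonal ξ := by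
      ext i j
      rw [Matrix.mul_diagonal, Matrix.diagonal_mul]
      show (TrM G i j - Dmax G φ i j) = ζ i * ((TrM G i j - (G.dist i j : ℂ))) * ξ j
      by_cases hij : i = j
      · subst hij
        show TrM G i i - phiMax G φ i i * (G.dist i i : ℂ) = _
        rw [hmax, SimpleGraph.dist_self]
        simp only [if_pos rfl]
        push_cast
        have hz : ζ i = (ξ i)⁻¹ := rfl
        rw [hz, zero_mul, sub_zero, mul_comm ((ξ i)⁻¹) (TrM G i i), mul_assoc, inv_mul_cancel₀ (hξ0 i), mul_one]
      · show TrM G i j - phiMax G φ i j * (G.dist i j : ℂ) = _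
        rw [hmax]
        simp only [hij, if_false]
        unfold TrM
        rw [Matrix.diagonal_apply_ne _ hij]
        rw [hζdef]
        ring
    rw [hsim]
    exact charpoly_conj_aux _ _ _ hζ1
end
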